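/- arXiv:2309.11396 — 2 statements merged into one kernel-verified Lean document; each statement's English description precedes it below -/
import Mathlib

section
/- Let u, v : ℝ → ℝ be Lipschitz with constant 1/2 and suppose |u(x) − v(x)| ≤ K for all x ∈ ℝ, for some constant K ≥ 0. Let ψ_u be the inverse of the bijection x ↦ x + u(x) and ψ_v the inverse of x ↦ x + v(x). Then sup_{y ∈ ℝ} |ψ_u(y) − ψ_v(y)| ≤ 2K. -/
theorem stmt_3 (u v : ℝ → ℝ)
    (hu : LipschitzWith (1/2) u) (hv : LipschitzWith (1/2) v)
    (K : ℝ) (hK : 0 ≤ K) (huv : ∀ x, |u x - v x| ≤ K)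
    (ψu ψv : ℝ → ℝ)
    (hψu₁ : Function.LeftInverse ψu (fun x => x + u x))
    (hψu₂ : Function.RightInverse ψu (fun x => x + u x))
    (hψv₁ : Function.LeftInverse ψv (fun x => x + v x))
    (hψv₂ : Function.RightInverse ψv (fun x => x + v x)) :
    ∀ y : ℝ, |ψu y - ψv y| ≤ 2 * K := by
  intro y
  set a := ψu y
  set b := ψv y
  have ha : a + u a = y := hψu₂ y
  have hb : b + v b = y := hψv₂ y
  have h1 : a - b = (v b - u b) + (u b - u a) := by linarith
  have h2 : |u b - u a| ≤ (1/2) * |a - b| := by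
    have := hu.dist_le_mul b a
    rw [Real.dist_eq, Real.dist_eq] at this
    rw [abs_sub_comm a b]
    simpa using this
  have h3 : |v b - u b| ≤ K := by
    rw [abs_sub_comm]; exact huv b
  have h4 : |a - b| ≤ K + (1/2) * |a - b| := by
    calc |a - b| ≤ |v b - u b| + |u b - u a| := h1 ▸ abs_add_le _ _
      _ ≤ K + (1/2) * |a - b| := add_le_add h3 h2
  linarith
end

section
/- Let u, v : ℝ → ℝ be Lipschitz with constant 1/2 and suppose |u(x) − v(x)| ≤ K for all x ∈ ℝ, for some constant K ≥ 0. Let ψ_u be the inverse of the bijection x ↦ x + u(x) and ψ_v the inverse of x ↦ x + v(x). Then for all y, y' ∈ ℝ, |v(ψ_v(y')) − u(ψ_u(y))| ≤ 2K + |y − y'|. -/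
theorem stmt_4 (u v : ℝ → ℝ)
    (hu : LipschitzWith (1/2) u) (hv : LipschitzWith (1/2) v)
    (K : ℝ) (hK : 0 ≤ K) (huv : ∀ x, |u x - v x| ≤ K)
    (ψu ψv : ℝ → ℝ)
    (hψu₁ : Function.LeftInverse ψu (fun x => x + u x))
    (hψu₂ : Function.RightInverse ψu (fun x => x + u x))
    (hψv₁ : Function.LeftInverse ψv (fun x => x + v x))
    (hψv₂ : Function.RightInverse ψv (fun x => x + v x)) :
    ∀ y y' : ℝ, |v (ψv y') - u (ψu y)| ≤ 2 * K + |y - y'| := by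
  intro y y'
  have hvlip : ∀ a b : ℝ, |v a - v b| ≤ (1/2) * |a - b| := by
    intro a b
    have := hv.dist_le_mul a b
    simpa [Real.dist_eq] using this
  set a := ψu y with ha'
  set b := ψv y with hb'
  set c := ψv y' with hc'
  have ha : a + u a = y := hψu₂ y
  have hb : b + v b = y := hψv₂ y
  have hc : c + v c = y' := hψv₂ y'
  -- |b - a| ≤ 2K
  have h1 : v b - u a = a - b := by linarith
  have h2 : |u a - v b| ≤ |u a - v a| + |v a - v b| := abs_sub_le _ _ _
  have h3 := huv a
  have h4 := hvlip a b
  have hab : |a - b| ≤ 2 * K := by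
    have e1 : |u a - v b| = |a - b| := by
      rw [show u a - v b = -(v b - u a) by ring, abs_neg, h1]
    linarith
  -- |c - b| ≤ 2 |y' - y|
  have h5 : c - b = (y' - y) + (v b - v c) := by linarith
  have h6 := hvlip b c
  have h7 : |c - b| ≤ |y' - y| + |v b - v c| := by
    rw [h5]; exact abs_add_le _ _
  have h8 : |b - c| = |c - b| := abs_sub_comm b c
  have hcb : |c - b| ≤ 2 * |y' - y| := by linarith
  -- conclude
  have h9 : |v c - u a| ≤ |v c - v b| + |v b - u a| := abs_sub_le _ _ _
  have h10 := hvlip c b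
  have h11 : |v b - u a| = |a - b| := by rw [h1]
  have h12 : |c - b| = |b - c| := abs_sub_comm c b
  have h13 : |y - y'| = |y' - y| := abs_sub_comm y y'
  linarith
end
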